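/- Let G be the H-join of arbitrary graphs G_1,…,G_p and let W̃ be the H-join associated matrix of size s = s_1 + ⋯ + s_p, built from the Frobenius companion matrices C(m_{G_i}) of the main characteristic polynomials on the diagonal blocks and off-diagonal blocks δ_{ij}(H) M_{ij} where the first row of M_{ij} is jᵀ W_{G_j} and all other rows are zero. Then every eigenvalue of W̃ is an eigenvalue of A(G); more precisely, if W̃ α = ρ α with α = (α_1,…,α_p), then the vector v with blocks v_i = W_{G_i} α_i satisfies A(G) v = ρ v. -/

import Mathlib

open Matrix

/-- The `H`-join of the family of graphs `G i`. -/
def SimpleGraph.hJoin {p : ℕ} (H : SimpleGraph (Fin p)) (n : Fin p → ℕ)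
    (G : ∀ i, SimpleGraph (Fin (n i))) : SimpleGraph ((i : Fin p) × Fin (n i)) where
  Adj x y := if h : x.1 = y.1 then (G x.1).Adj x.2 (Fin.cast (congrArg n h.symm) y.2)
             else H.Adj x.1 y.1
  symm := by
    constructor
    rintro ⟨i, a⟩ ⟨k, b⟩ hadj
    dsimp at *
    by_cases h : i = k
    · subst h
      rw [dif_pos rfl] at hadj ⊢
      simpa using ((G i).symm.symm _ _ (by simpa using hadj))
    · rw [dif_neg h] at hadj
      rw [dif_neg (Ne.symm h)]
      exact H.symm.symm _ _ hadj
  loopless := by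
    constructor
    rintro ⟨i, a⟩ h
    rw [dif_pos rfl] at h
    simp at h

noncomputable instance {p : ℕ} (H : SimpleGraph (Fin p)) (n : Fin p → ℕ)
    (G : ∀ i, SimpleGraph (Fin (n i))) : DecidableRel (H.hJoin n G).Adj :=
  Classical.decRel _

/-- `μ` is a main eigenvalue of the matrix `A`. -/
def Matrix.IsMainEig {m : ℕ} (A : Matrix (Fin m) (Fin m) ℝ) (μ : ℝ) : Prop :=
  ∃ v : Fin m → ℝ, A *ᵥ v = μ • v ∧ v ⬝ᵥ (fun _ => (1 : ℝ)) ≠ 0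

/-!
Put `W = blockDiagonal' W_{G_i}`. The whole statement follows from `A(G) W = W W̃` together with
the injectivity of `W` (each `W_{G_i}` has full column rank). On a diagonal block the identity
reads `A(G_i) W_{G_i} = W_{G_i} C(m_{G_i})`, which holds because `m_{G_i}(A(G_i)) j = 0`: in an
orthonormal eigenbasis of `A(G_i)`, `j` only has components along eigenvectors of main eigenvalues.
On an off-diagonal block both sides equal `δ_{ij}(H) j jᵀ W_{G_j}`, because the first column of
`W_{G_i}` is `j`.
-/

open Polynomial

namespace Matrix

section Eigen

variable {R m n : Type*} [CommRing R] [Fintype m] [Fintype n] {A : Matrix m m R}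
  {B : Matrix n n R} {W : Matrix m n R}

theorem mulVec_mulVec_eq_smul_of_mul_eq_mul (hAW : A * W = W * B) {ρ : R} {α : n → R}
    (h : B *ᵥ α = ρ • α) : A *ᵥ (W *ᵥ α) = ρ • (W *ᵥ α) := by
  rw [mulVec_mulVec, hAW, ← mulVec_mulVec, h, mulVec_smul]

theorem hasEigenvalue_mulVecLin_of_mul_eq_mul
    (hAW : A * W = W * B) (hW : Function.Injective W.mulVec) {ρ : R}
    (h : Module.End.HasEigenvalue B.mulVecLin ρ) : Module.End.HasEigenvalue A.mulVecLin ρ := by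
  obtain ⟨α, hα, hα0⟩ := h.exists_hasEigenvector
  rw [Module.End.mem_eigenspace_iff, mulVecLin_apply] at hα
  refine Module.End.hasEigenvalue_of_hasEigenvector (x := W *ᵥ α) ⟨?_, ?_⟩
  · rw [Module.End.mem_eigenspace_iff, mulVecLin_apply]
    exact mulVec_mulVec_eq_smul_of_mul_eq_mul hAW hα
  · exact fun h0 => hα0 (hW (h0.trans (mulVec_zero W).symm))

end Eigen

theorem aeval_mulVec_of_mulVec_eq_smul {R m : Type*} [CommRing R] [Fintype m]
    [DecidableEq m] {A : Matrix m m R} {v : m → R} {μ : R} (h : A *ᵥ v = μ • v) (P : R[X]) :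
    aeval A P *ᵥ v = P.eval μ • v := by
  induction P using Polynomial.induction_on' with
  | add p q hp hq => simp [add_mulVec, hp, hq, add_smul]
  | monomial k a =>
    have hk : A ^ k *ᵥ v = μ ^ k • v := by
      induction k with
      | zero => simp
      | succ k ih => rw [pow_succ', ← mulVec_mulVec, ih, mulVec_smul, h, smul_smul, pow_succ]
    rw [aeval_monomial, ← mulVec_mulVec, hk, Algebra.algebraMap_eq_smul_one, mulVec_smul,
      smul_mulVec, one_mulVec, smul_smul, eval_monomial, mul_comm]

theorem mulVec_injective_of_rank_eq_card {K m n : Type*} [Field K] [Fintype n]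
    {W : Matrix m n K} (h : W.rank = Fintype.card n) : Function.Injective W.mulVec := by
  rw [mulVec_injective_iff, linearIndependent_iff_card_eq_finrank_span, Set.finrank,
    ← rank_eq_finrank_span_cols, h]

theorem blockDiagonal'_mulVec_apply {R ι : Type*} [Semiring R] [Fintype ι] [DecidableEq ι]
    {m n : ι → Type*} [∀ i, Fintype (n i)] (M : ∀ i, Matrix (m i) (n i) R)
    (v : (Σ i, n i) → R) (i : ι) (a : m i) :
    (blockDiagonal' M *ᵥ v) ⟨i, a⟩ = (M i *ᵥ fun k => v ⟨i, k⟩) a := by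
  rw [mulVec, dotProduct, Fintype.sum_sigma, Fintype.sum_eq_single i]
  · simp [blockDiagonal'_apply_eq, mulVec, dotProduct]
  · intro j hj
    simp [blockDiagonal'_apply_ne _ _ _ (Ne.symm hj)]

theorem blockDiagonal'_mulVec_injective {R ι : Type*} [Semiring R] [Fintype ι]
    [DecidableEq ι] {m n : ι → Type*} [∀ i, Fintype (n i)] {M : ∀ i, Matrix (m i) (n i) R}
    (hM : ∀ i, Function.Injective (M i).mulVec) :
    Function.Injective (blockDiagonal' M).mulVec := by
  intro v w h
  ext ⟨i, k⟩
  have hi : (M i *ᵥ fun k => v ⟨i, k⟩) = M i *ᵥ fun k => w ⟨i, k⟩ := funext fun a => by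
    simpa only [blockDiagonal'_mulVec_apply] using congrFun h ⟨i, a⟩
  exact congrFun (hM i hi) k

theorem IsHermitian.aeval_mulVec_one_eq_zero {m : ℕ} {A : Matrix (Fin m) (Fin m) ℝ}
    (hA : A.IsHermitian) {P : ℝ[X]} (hP : ∀ μ, A.IsMainEig μ → P.eval μ = 0) :
    aeval A P *ᵥ (fun _ => 1) = 0 := by
  set b := hA.eigenvectorBasis
  have hone : (fun _ => 1 : Fin m → ℝ) = ∑ j, ((b j).ofLp ⬝ᵥ fun _ => 1) • (b j).ofLp := by
    have := congrArg WithLp.ofLp (b.sum_repr' (WithLp.toLp 2 fun _ => 1))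
    simpa [PiLp.inner_apply, dotProduct, mul_comm] using this.symm
  rw [hone, mulVec_sum]
  refine Finset.sum_eq_zero fun j _ => ?_
  have hj := hA.mulVec_eigenvectorBasis j
  rw [mulVec_smul, aeval_mulVec_of_mulVec_eq_smul hj]
  by_cases hmain : ((b j).ofLp ⬝ᵥ fun _ => 1) = 0
  · rw [hmain, zero_smul]
  · rw [hP _ ⟨_, hj, hmain⟩, zero_smul, smul_zero]

theorem IsHermitian.pow_mulVec_one_eq_sum {m s : ℕ} {A : Matrix (Fin m) (Fin m) ℝ}
    (hA : A.IsHermitian) {S : Finset ℝ} (hS : ∀ μ, A.IsMainEig μ → μ ∈ S) {c : Fin s → ℝ}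
    (hc : ∏ μ ∈ S, (X - C μ) = X ^ s - ∑ k : Fin s, C (c k) * X ^ (k : ℕ)) :
    A ^ s *ᵥ (fun _ => 1) = ∑ k : Fin s, c k • (A ^ (k : ℕ) *ᵥ fun _ => 1) := by
  have h := hA.aeval_mulVec_one_eq_zero (P := ∏ μ ∈ S, (X - C μ))
    fun μ hμ => by simp [eval_prod, Finset.prod_eq_zero (hS μ hμ)]
  simpa [hc, sub_mulVec, sum_mulVec, Algebra.algebraMap_eq_smul_one, smul_mulVec, sub_eq_zero]
    using h

/-- The companion matrix of `X ^ s - ∑ k, c k * X ^ k`. -/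
def companion {R : Type*} [Zero R] [One R] {s : ℕ} (c : Fin s → R) :
    Matrix (Fin s) (Fin s) R :=
  of fun k l => if (l : ℕ) = s - 1 then c k else if (k : ℕ) = l + 1 then 1 else 0

def krylov {R m : Type*} [Semiring R] [Fintype m] [DecidableEq m] (A : Matrix m m R)
    (u : m → R) (s : ℕ) : Matrix m (Fin s) R :=
  of fun a k => (A ^ (k : ℕ) *ᵥ u) a

section Krylov

variable {R m : Type*} [CommSemiring R] [Fintype m] [DecidableEq m] {A : Matrix m m R}
  {u : m → R} {s : ℕ} {c : Fin s → R}

theorem mul_krylov_eq_krylov_mul_companion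
    (h : A ^ s *ᵥ u = ∑ k : Fin s, c k • (A ^ (k : ℕ) *ᵥ u)) :
    A * krylov A u s = krylov A u s * companion c := by
  ext a l
  have hA : (A * krylov A u s) a l = (A ^ ((l : ℕ) + 1) *ᵥ u) a := by
    rw [pow_succ', ← mulVec_mulVec]; rfl
  rw [hA, mul_apply]
  by_cases hl : (l : ℕ) = s - 1
  · have hs : (l : ℕ) + 1 = s := by omega
    simp only [companion, krylov, of_apply, if_pos hl, hs, h, Finset.sum_apply, Pi.smul_apply,
      smul_eq_mul, mul_comm]
  · have hl' : (l : ℕ) + 1 < s := by omega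
    rw [Finset.sum_eq_single ⟨(l : ℕ) + 1, hl'⟩]
    · simp [companion, krylov, hl]
    · intro k _ hk
      have hk' : (k : ℕ) ≠ l + 1 := fun e => hk (Fin.ext e)
      simp [companion, hl, hk']
    · simp

theorem krylov_mulVec_eq (h : A ^ s *ᵥ u = ∑ k : Fin s, c k • (A ^ (k : ℕ) *ᵥ u)) :
    krylov A u s *ᵥ (fun k => if (k : ℕ) = 0 then 1 else 0) = u := by
  rcases Nat.eq_zero_or_pos s with rfl | hs
  · -- for `s = 0` the recurrence reads `u = 0`
    simpa using h.symm
  · ext a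
    rw [mulVec, dotProduct, Finset.sum_eq_single ⟨0, hs⟩]
    · simp [krylov]
    · intro k _ hk
      have hk' : (k : ℕ) ≠ 0 := fun e => hk (Fin.ext e)
      simp [hk']
    · simp

end Krylov

end Matrix

namespace SimpleGraph

variable {p : ℕ} {H : SimpleGraph (Fin p)} {n : Fin p → ℕ} {G : ∀ i, SimpleGraph (Fin (n i))}

theorem hJoin_adj_mk_self {i : Fin p} {a b : Fin (n i)} :
    (H.hJoin n G).Adj ⟨i, a⟩ ⟨i, b⟩ ↔ (G i).Adj a b := by
  simp [hJoin]

theorem hJoin_adj_mk_of_ne {i j : Fin p} (hij : i ≠ j) {a : Fin (n i)} {b : Fin (n j)} :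
    (H.hJoin n G).Adj ⟨i, a⟩ ⟨j, b⟩ ↔ H.Adj i j := by
  simp [hJoin, hij]

theorem hJoin_adjMatrix (R : Type*) [AddZeroClass R] [One R] [DecidableRel H.Adj]
    [∀ i, DecidableRel (G i).Adj] :
    (H.hJoin n G).adjMatrix R =
      blockDiagonal' (fun i => (G i).adjMatrix R) +
        (H.adjMatrix R).submatrix Sigma.fst Sigma.fst := by
  ext ⟨i, a⟩ ⟨j, b⟩
  by_cases hij : i = j
  · subst hij
    simp [adjMatrix_apply, blockDiagonal'_apply_eq, hJoin_adj_mk_self]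
  · simp [adjMatrix_apply, blockDiagonal'_apply_ne _ _ _ hij, hJoin_adj_mk_of_ne hij]

variable {R : Type*} [Semiring R] [DecidableRel H.Adj] {s : Fin p → ℕ}

variable (H) in
/-- With `C i = C(m_{G_i})` and `W i = W_{G_i}` this is the `H`-join associated matrix `W̃`. -/
def hJoinAssocMatrix (C : ∀ i, Matrix (Fin (s i)) (Fin (s i)) R)
    (W : ∀ i, Matrix (Fin (n i)) (Fin (s i)) R) : Matrix (Σ i, Fin (s i)) (Σ i, Fin (s i)) R :=
  blockDiagonal' C + of fun x y => if (x.2 : ℕ) = 0 then H.adjMatrix R x.1 y.1 * ∑ a, W y.1 a y.2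
    else 0

theorem hJoin_adjMatrix_mul_blockDiagonal' [∀ i, DecidableRel (G i).Adj]
    {C : ∀ i, Matrix (Fin (s i)) (Fin (s i)) R} {W : ∀ i, Matrix (Fin (n i)) (Fin (s i)) R} (hAW : ∀ i, (G i).adjMatrix R * W i = W i * C i)
    (hW : ∀ i, W i *ᵥ (fun k => if (k : ℕ) = 0 then 1 else 0) = 1) :
    (H.hJoin n G).adjMatrix R * blockDiagonal' W = blockDiagonal' W * H.hJoinAssocMatrix C W := by
  rw [hJoin_adjMatrix, hJoinAssocMatrix, Matrix.add_mul, Matrix.mul_add, ← blockDiagonal'_mul,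
    ← blockDiagonal'_mul]
  simp only [hAW]
  congr 1
  ext ⟨i, a⟩ ⟨j, l⟩
  simp only [mul_apply, Fintype.sum_sigma, submatrix_apply, of_apply]
  rw [Fintype.sum_eq_single j fun k hk => by simp [blockDiagonal'_apply_ne _ _ _ hk],
    Fintype.sum_eq_single i fun k hk => by simp [blockDiagonal'_apply_ne _ _ _ (Ne.symm hk)]]
  simp only [blockDiagonal'_apply_eq]
  have hWa : ∑ m, W i a m * (if (m : ℕ) = 0 then 1 else 0) = 1 := congrFun (hW i) a
  calc ∑ b, H.adjMatrix R i j * W j b l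
      = 1 * (H.adjMatrix R i j * ∑ b, W j b l) := by rw [one_mul, Finset.mul_sum]
    _ = ∑ m, W i a m * (if (m : ℕ) = 0 then H.adjMatrix R i j * ∑ b, W j b l else 0) := by
      rw [← hWa, Finset.sum_mul]
      refine Finset.sum_congr rfl fun m _ => ?_
      split_ifs <;> simp
    _ = _ := rfl

theorem hJoinAssocMatrix_companion_apply (c : ∀ i, Fin (s i) → R)
    (W : ∀ i, Matrix (Fin (n i)) (Fin (s i)) R) (x y : Σ i, Fin (s i)) :
    H.hJoinAssocMatrix (fun i => companion (c i)) W x y =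
      if x.1 = y.1 then
        (if (y.2 : ℕ) = s x.1 - 1 then c x.1 x.2 else if (x.2 : ℕ) = (y.2 : ℕ) + 1 then 1 else 0)
      else if H.Adj x.1 y.1 then (if (x.2 : ℕ) = 0 then ∑ a, W y.1 a y.2 else 0) else 0 := by
  obtain ⟨i, k⟩ := x
  obtain ⟨j, l⟩ := y
  by_cases hij : i = j
  · subst hij
    simp [hJoinAssocMatrix, blockDiagonal'_apply_eq, companion]
  · by_cases hadj : H.Adj i j <;>
      simp [hJoinAssocMatrix, blockDiagonal'_apply_ne _ _ _ hij, hij, hadj]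

end SimpleGraph

open Polynomial in
theorem hJoin_assocMatrix_eigenvalues_general {p : ℕ} (H : SimpleGraph (Fin p))
    [DecidableRel H.Adj] (n : Fin p → ℕ) (G : ∀ i, SimpleGraph (Fin (n i)))
    [∀ i, DecidableRel (G i).Adj]
    -- `s i` is the number of distinct main eigenvalues of `G i`
    (s : Fin p → ℕ)
    -- `Wmat i` is the walk matrix of `G i`, of full column rank
    (Wmat : ∀ i, Matrix (Fin (n i)) (Fin (s i)) ℝ)
    (hWmat : ∀ i a k, Wmat i a k = (((G i).adjMatrix ℝ ^ (k : ℕ)) *ᵥ fun _ => (1 : ℝ)) a)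
    (hrank : ∀ i, (Wmat i).rank = s i)
    -- `c i` lists the coefficients of the main characteristic polynomial of `G i`
    (S : Fin p → Finset ℝ) (hS : ∀ i μ, μ ∈ S i ↔ ((G i).adjMatrix ℝ).IsMainEig μ)
    (c : ∀ i, Fin (s i) → ℝ)
    (hc : ∀ i, ∏ μ ∈ S i, (X - C μ) =
      X ^ (s i) - ∑ k : Fin (s i), C (c i k) * X ^ (k : ℕ))
    -- `Wt` is the `H`-join associated matrix `W̃`
    (Wt : Matrix ((i : Fin p) × Fin (s i)) ((i : Fin p) × Fin (s i)) ℝ)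
    (hWt : ∀ x y, Wt x y =
      if x.1 = y.1 then
        -- companion matrix `C(m_{G_{x.1}})`
        (if (y.2 : ℕ) = s x.1 - 1 then c x.1 x.2
         else if (x.2 : ℕ) = (y.2 : ℕ) + 1 then 1 else 0)
      else if H.Adj x.1 y.1 then
        -- `M_{x.1, y.1}`: first row `jᵀ W_{G_{y.1}}`, zeros elsewhere
        (if (x.2 : ℕ) = 0 then ∑ a, Wmat y.1 a y.2 else 0)
      else 0) :
    (∀ ρ : ℝ, Module.End.HasEigenvalue Wt.mulVecLin ρ →
        Module.End.HasEigenvalue ((H.hJoin n G).adjMatrix ℝ).mulVecLin ρ) ∧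
    (∀ (ρ : ℝ) (α : ((i : Fin p) × Fin (s i)) → ℝ), Wt *ᵥ α = ρ • α →
      (H.hJoin n G).adjMatrix ℝ *ᵥ (fun x => ∑ k : Fin (s x.1), Wmat x.1 x.2 k * α ⟨x.1, k⟩)
        = ρ • (fun x => ∑ k : Fin (s x.1), Wmat x.1 x.2 k * α ⟨x.1, k⟩)) := by
  have hrec : ∀ i, (G i).adjMatrix ℝ ^ s i *ᵥ (fun _ => 1) =
      ∑ k, c i k • ((G i).adjMatrix ℝ ^ (k : ℕ) *ᵥ fun _ => 1) :=
    fun i => ((G i).isHermitian_adjMatrix ℝ).pow_mulVec_one_eq_sum (fun μ => (hS i μ).2) (hc i)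
  have hW : ∀ i, Wmat i = krylov ((G i).adjMatrix ℝ) (fun _ => 1) (s i) :=
    fun i => ext (hWmat i)
  have hWt' : Wt = H.hJoinAssocMatrix (fun i => companion (c i)) Wmat :=
    ext fun x y => by rw [hWt, SimpleGraph.hJoinAssocMatrix_companion_apply]
  have hAW : (H.hJoin n G).adjMatrix ℝ * blockDiagonal' Wmat = blockDiagonal' Wmat * Wt := by
    rw [hWt']
    refine SimpleGraph.hJoin_adjMatrix_mul_blockDiagonal' (fun i => ?_) (fun i => ?_) <;> rw [hW i]
    exacts [mul_krylov_eq_krylov_mul_companion (hrec i), krylov_mulVec_eq (hrec i)]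
  have hv : ∀ α, (fun x => ∑ k : Fin (s x.1), Wmat x.1 x.2 k * α ⟨x.1, k⟩) =
      blockDiagonal' Wmat *ᵥ α :=
    fun α => funext fun x => (blockDiagonal'_mulVec_apply Wmat α x.1 x.2).symm
  have hinj : Function.Injective (blockDiagonal' Wmat).mulVec :=
    blockDiagonal'_mulVec_injective fun i => mulVec_injective_of_rank_eq_card (by simp [hrank])
  refine ⟨fun ρ => hasEigenvalue_mulVecLin_of_mul_eq_mul hAW hinj, fun ρ α hα => ?_⟩
  rw [hv]
  exact mulVec_mulVec_eq_smul_of_mul_eq_mul hAW hα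

open Polynomial in
/-- Every eigenvalue of the `H`-join associated matrix `W̃` is an eigenvalue of the
adjacency matrix of the `H`-join: if `W̃ α = ρ α` with `α = (α_1, …, α_p)`, then the
vector `v` with blocks `v_i = W_{G_i} α_i` satisfies `A(G) v = ρ v`. -/
theorem hJoin_assocMatrix_eigenvalues {p : ℕ} (H : SimpleGraph (Fin p))
    [DecidableRel H.Adj] (n : Fin p → ℕ) (G : ∀ i, SimpleGraph (Fin (n i)))
    [∀ i, DecidableRel (G i).Adj]
    -- `s i` is the number of distinct main eigenvalues of `G i`
    (s : Fin p → ℕ) (hs : ∀ i, s i = {μ : ℝ | ((G i).adjMatrix ℝ).IsMainEig μ}.ncard)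
    -- `Wmat i` is the walk matrix of `G i`, of full column rank
    (Wmat : ∀ i, Matrix (Fin (n i)) (Fin (s i)) ℝ)
    (hWmat : ∀ i a k, Wmat i a k = (((G i).adjMatrix ℝ ^ (k : ℕ)) *ᵥ fun _ => (1 : ℝ)) a)
    (hrank : ∀ i, (Wmat i).rank = s i)
    -- `c i` lists the coefficients of the main characteristic polynomial of `G i`
    (S : Fin p → Finset ℝ) (hS : ∀ i μ, μ ∈ S i ↔ ((G i).adjMatrix ℝ).IsMainEig μ)
    (c : ∀ i, Fin (s i) → ℝ)
    (hc : ∀ i, ∏ μ ∈ S i, (X - C μ) =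
      X ^ (s i) - ∑ k : Fin (s i), C (c i k) * X ^ (k : ℕ))
    -- `Wt` is the `H`-join associated matrix `W̃`
    (Wt : Matrix ((i : Fin p) × Fin (s i)) ((i : Fin p) × Fin (s i)) ℝ)
    (hWt : ∀ x y, Wt x y =
      if x.1 = y.1 then
        -- companion matrix `C(m_{G_{x.1}})`
        (if (y.2 : ℕ) = s x.1 - 1 then c x.1 x.2
         else if (x.2 : ℕ) = (y.2 : ℕ) + 1 then 1 else 0)
      else if H.Adj x.1 y.1 then
        -- `M_{x.1, y.1}`: first row `jᵀ W_{G_{y.1}}`, zeros elsewhere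
        (if (x.2 : ℕ) = 0 then ∑ a, Wmat y.1 a y.2 else 0)
      else 0) :
    (∀ ρ : ℝ, Module.End.HasEigenvalue Wt.mulVecLin ρ →
        Module.End.HasEigenvalue ((H.hJoin n G).adjMatrix ℝ).mulVecLin ρ) ∧
    (∀ (ρ : ℝ) (α : ((i : Fin p) × Fin (s i)) → ℝ), Wt *ᵥ α = ρ • α →
      (H.hJoin n G).adjMatrix ℝ *ᵥ (fun x => ∑ k : Fin (s x.1), Wmat x.1 x.2 k * α ⟨x.1, k⟩)
        = ρ • (fun x => ∑ k : Fin (s x.1), Wmat x.1 x.2 k * α ⟨x.1, k⟩)) :=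
  hJoin_assocMatrix_eigenvalues_general H n G s Wmat hWmat hrank S hS c hc Wt hWt
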